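/- arXiv:2311.14575 — 11 statements merged into one kernel-verified Lean document; each statement's English description precedes it below -/
import Mathlib

section
/- Let $(Q,\cdot,*,/)$ be a binary algebraic structure where $(Q,*,/)$ is a quandle. Then $(Q,\cdot,*,/)$ is an oriented singquandle (i.e., satisfies OS1'-OS4') if and only if the two identities $(x\cdot y)*z = (x*z)\cdot(y*z)$ and $(z*y)*x = (z*(x\cdot y))*((y*x)\cdot x)$ hold for all $x,y,z \in Q$. -/
def IsRightQuasigroup {Q : Type*} (mul div : Q → Q → Q) : Prop :=
  (∀ x y, div (mul x y) y = x) ∧ (∀ x y, mul (div x y) y = x)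

def IsQuandle {Q : Type*} (mul div : Q → Q → Q) : Prop :=
  IsRightQuasigroup mul div ∧ (∀ x, mul x x = x) ∧
  (∀ x y z, mul (mul x y) z = mul (mul x z) (mul y z))

/-- Oriented singquandle via the original axioms OS1'–OS4'. -/
def IsOrientedSingquandleOrig {Q : Type*} (cdot mul div : Q → Q → Q) : Prop :=
  IsQuandle mul div ∧
  (∀ x y z, mul (cdot y x) z = cdot (mul y z) (mul x z)) ∧
  (∀ x y z, mul (cdot x (cdot y x)) z = cdot (mul x z) (cdot (mul y z) (mul x z))) ∧
  (∀ x y z, mul (mul y x) z = mul (mul y (cdot z x)) (cdot (mul x z) z)) ∧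
  (∀ x y, mul (cdot y x) (cdot (mul x y) y) = cdot (mul y (mul x y)) (mul x y))

theorem oriented_singquandle_characterization {Q : Type*} (cdot mul div : Q → Q → Q)
    (hq : IsQuandle mul div) :
    IsOrientedSingquandleOrig cdot mul div ↔
      ((∀ x y z, mul (cdot x y) z = cdot (mul x z) (mul y z)) ∧
       (∀ x y z, mul (mul z y) x = mul (mul z (cdot x y)) (cdot (mul y x) x))) := by
  obtain ⟨⟨hd, hm⟩, hidem, hsd⟩ := hq
  -- cancellation: mul u c = v → u = div v c
  have hcancel : ∀ u c : Q, div (mul u c) c = u := hd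
  have hdivself : ∀ a : Q, div a a = a := by
    intro a
    have := hd a a
    rwa [hidem a] at this
  constructor
  · rintro ⟨_, h1, _, h3, _⟩
    exact ⟨fun x y z => h1 y x z, fun x y z => h3 y z x⟩
  · rintro ⟨h1, h2⟩
    refine ⟨⟨⟨hd, hm⟩, hidem, hsd⟩, fun x y z => h1 y x z, ?_, fun x y z => h2 z x y, ?_⟩
    · -- OS2'
      intro x y z
      rw [h1, h1]
    · -- OS4'
      intro x y
      set c := cdot y x with hc
      -- key: mul (mul z x) y = mul (mul z c) (cdot (mul x y) y)
      have key : ∀ z : Q, mul (mul z x) y = mul (mul z c) (cdot (mul x y) y) :=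
        fun z => h2 y x z
      have ky : mul (mul (div y c) x) y = mul y (cdot (mul x y) y) := by
        have := key (div y c); rwa [hm y c] at this
      have kx : mul (mul (div x c) x) y = mul x (cdot (mul x y) y) := by
        have := key (div x c); rwa [hm x c] at this
      -- cdot (div y c) (div x c) = c
      have hu : cdot (div y c) (div x c) = c := by
        have h := h1 (div y c) (div x c) c
        rw [hm y c, hm x c, ← hc] at h
        have := hd (cdot (div y c) (div x c)) c
        rw [h, hdivself] at this
        exact this.symm
      calc mul (cdot y x) (cdot (mul x y) y)
          = cdot (mul y (cdot (mul x y) y)) (mul x (cdot (mul x y) y)) := h1 y x _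
        _ = cdot (mul (mul (div y c) x) y) (mul (mul (div x c) x) y) := by rw [ky, kx]
        _ = mul (cdot (mul (div y c) x) (mul (div x c) x)) y :=
            (h1 (mul (div y c) x) (mul (div x c) x) y).symm
        _ = mul (mul (cdot (div y c) (div x c)) x) y := by rw [← h1]
        _ = mul (mul c x) y := by rw [hu]
        _ = mul (cdot (mul y x) (mul x x)) y := by rw [hc, h1]
        _ = mul (cdot (mul y x) x) y := by rw [hidem]
        _ = cdot (mul (mul y x) y) (mul x y) := h1 _ _ _
        _ = cdot (mul y (mul x y)) (mul x y) := by rw [hsd y x y, hidem]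
end

section
/- Let $(Q,*,/)$ be a quandle and let $\rho_x$ denote right multiplication by $x$ with respect to $*$. Then $(Q,*,*,/)$ is an oriented singquandle if and only if $\rho_y^2 = \rho_{y*x}\circ\rho_{y/x}$ for all $x,y \in Q$. -/
def IsOrientedSingquandle {Q : Type*} (cdot mul div : Q → Q → Q) : Prop :=
  IsQuandle mul div ∧
  (∀ x y z, mul (cdot x y) z = cdot (mul x z) (mul y z)) ∧
  (∀ x y z, mul (mul z y) x = mul (mul z (cdot x y)) (cdot (mul y x) x))

theorem singquandle_self_iff {Q : Type*} (mul div : Q → Q → Q) (hq : IsQuandle mul div) :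
    IsOrientedSingquandle mul mul div ↔
      ∀ x y : Q, ((fun z => mul (mul z y) y) : Q → Q) =
        (fun z => mul z (mul y x)) ∘ (fun z => mul z (div y x)) := by
  obtain ⟨⟨h1, h2⟩, hid, hd⟩ := hq
  -- injectivity of right multiplication
  have inj : ∀ b {u v : Q}, mul u b = mul v b → u = v := by
    intro b u v h
    have := congrArg (fun t => div t b) h
    simpa [h1] using this
  -- div distributes: (z*a)/b = (z/b)*(a/b)
  have starDiv : ∀ a b z : Q, div (mul z a) b = mul (div z b) (div a b) := by
    intro a b z
    apply inj b
    rw [h2, hd, h2, h2]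
  -- key intermediate identity E
  have keyE : (∀ x y z : Q, mul (mul z y) x = mul (mul z (mul x y)) (mul (mul y x) x)) ↔
      (∀ x y z : Q, mul z y = mul (div (mul z (mul x y)) x) (mul y x)) := by
    constructor
    · intro H x y z
      apply inj x
      rw [hd (div (mul z (mul x y)) x) (mul y x) x, h2]
      exact H x y z
    · intro E x y z
      rw [E x y z, hd, h2]
  constructor
  · rintro ⟨-, -, hH⟩ x y
    have E := keyE.mp hH
    funext z
    show mul (mul z y) y = mul (mul z (div y x)) (mul y x)
    rw [E x y (mul z y), ← hd, starDiv, h1]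
  · intro hC
    have hC' : ∀ x y z : Q, mul (mul z y) y = mul (mul z (div y x)) (mul y x) := by
      intro x y z
      exact congrFun (hC x y) z
    have E : ∀ x y z : Q, mul z y = mul (div (mul z (mul x y)) x) (mul y x) := by
      intro x y z
      have h := hC' x y (div z y)
      rw [h2] at h
      rw [h]
      congr 1
      apply inj x
      rw [h2, hd, h2, hd, h2]
    exact ⟨⟨⟨h1, h2⟩, hid, hd⟩, hd, keyE.mpr E⟩
end

section
/- Let $(Q,*,/)$ be a quandle. Then $(Q,*,*,/)$ is an oriented singquandle if and only if $(Q,/,/,*)$ is an oriented singquandle. -/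
section Aux

variable {Q : Type*} {m d : Q → Q → Q}

/-- The third singquandle axiom when the singular operation equals the quandle operation. -/
def Cond3 {Q : Type*} (m : Q → Q → Q) : Prop :=
  ∀ x y z, m (m z y) x = m (m z (m x y)) (m (m y x) x)

/-- A symmetric intermediate condition: `R_x⁻¹ R_y² R_x⁻¹ = R_y R_x⁻² R_y`. -/
def CondS {Q : Type*} (m d : Q → Q → Q) : Prop :=
  ∀ s x y, d (m (m (d s x) y) y) x = m (d (d (m s y) x) x) y

/-- `C2` form: `R_x⁻¹ R_y² = R_y R_x⁻² R_y R_x`. -/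
def CondC2 {Q : Type*} (m d : Q → Q → Q) : Prop :=
  ∀ s x y, d (m (m s y) y) x = m (d (d (m (m s x) y) x) x) y

lemma quandle_K1 (h : IsQuandle m d) : ∀ z a b, m z (m a b) = m (m (d z b) a) b := by
  obtain ⟨⟨c1, c2⟩, idem, sd⟩ := h
  intro z a b
  rw [sd, c2]

lemma quandle_dual (h : IsQuandle m d) : IsQuandle d m := by
  obtain ⟨⟨c1, c2⟩, idem, sd⟩ := h
  refine ⟨⟨c2, c1⟩, ?_, ?_⟩
  · intro x
    have hx := c1 x x
    rwa [idem] at hx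
  · have M1 : ∀ a b c, m (d a c) (d b c) = d (m a b) c := by
      intro a b c
      have h1 : m (m (d a c) (d b c)) c = m a b := by rw [sd, c2, c2]
      have h2 := congrArg (fun t => d t c) h1
      simpa only [c1] using h2
    intro x y z
    have h1 : m (d (d x y) z) (d y z) = d x z := by rw [M1, c2]
    have h2 := congrArg (fun t => d t (d y z)) h1
    simpa only [c1] using h2

lemma cond3_to_C2 (h : IsQuandle m d) (hA : Cond3 m) : CondC2 m d := by
  have K1 := quandle_K1 h
  obtain ⟨⟨c1, c2⟩, idem, sd⟩ := h
  intro s x y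
  have hA' := hA x y (m s y)
  -- rewrite the RHS of hA'
  rw [K1 (m s y) x y, c1] at hA'
  rw [K1 (m (m s x) y) (m y x) x, K1 (d (m (m s x) y) x) y x] at hA'
  -- hA' : m (m (m s y) y) x = m (m (m (d (d (m (m s x) y) x) x) y) x) x
  have e1 := congrArg (fun t => d t x) hA'
  simp only [c1] at e1
  have e2 := congrArg (fun t => d t x) e1
  simpa only [c1] using e2

lemma C2_to_cond3 (h : IsQuandle m d) (hC : CondC2 m d) : Cond3 m := by
  have K1 := quandle_K1 h
  obtain ⟨⟨c1, c2⟩, idem, sd⟩ := h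
  intro x y z
  have hC' := hC (d z y) x y
  rw [c2] at hC'
  -- hC' : d (m z y) x = m (d (d (m (m (d z y) x) y) x) x) y
  rw [K1 z x y]
  rw [K1 (m (m (d z y) x) y) (m y x) x, K1 (d (m (m (d z y) x) y) x) y x]
  -- goal : m (m z y) x = m (m (m (d (d (m (m (d z y) x) y) x) x) y) x) x
  rw [← hC', c2]

lemma C2_to_S (h : IsQuandle m d) (hC : CondC2 m d) : CondS m d := by
  obtain ⟨⟨c1, c2⟩, idem, sd⟩ := h
  intro s x y
  have := hC (d s x) x y
  rwa [c2] at this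

lemma S_to_C2 (h : IsQuandle m d) (hS : CondS m d) : CondC2 m d := by
  obtain ⟨⟨c1, c2⟩, idem, sd⟩ := h
  intro s x y
  have := hS (m s x) x y
  rwa [c1] at this

lemma S_swap (h : IsQuandle m d) (hS : CondS m d) : CondS d m := by
  obtain ⟨⟨c1, c2⟩, idem, sd⟩ := h
  intro s x y
  -- goal : m (d (d (m s x) y) y) x = d (m (m (d s y) x) x) y
  set u := m (d (d (m s x) y) y) x with hu
  have h1 := hS u x y
  have h2 : d u x = d (d (m s x) y) y := by rw [hu, c1]
  rw [h2, c2, c2, c1] at h1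
  -- h1 : s = m (d (d (m u y) x) x) y
  have h3 : d s y = d (d (m u y) x) x := by rw [h1, c1]
  rw [h3, c2, c2, c1]

lemma cond3_iff_dual (h : IsQuandle m d) : Cond3 m ↔ Cond3 d := by
  have hd := quandle_dual h
  constructor
  · intro hA
    exact C2_to_cond3 hd (S_to_C2 hd (S_swap h (C2_to_S h (cond3_to_C2 h hA))))
  · intro hA
    exact C2_to_cond3 h (S_to_C2 h (S_swap hd (C2_to_S hd (cond3_to_C2 hd hA))))

end Aux

theorem singquandle_dual_iff {Q : Type*} (mul div : Q → Q → Q) (hq : IsQuandle mul div) :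
    IsOrientedSingquandle mul mul div ↔ IsOrientedSingquandle div div mul := by
  have hd := quandle_dual hq
  constructor
  · rintro ⟨-, -, hA⟩
    exact ⟨hd, hd.2.2, (cond3_iff_dual hq).mp hA⟩
  · rintro ⟨-, -, hA⟩
    exact ⟨hq, hq.2.2, (cond3_iff_dual hq).mpr hA⟩
end

section
/- Let $(Q,*,/)$ be a quandle and $\circ$ a binary operation on $Q$. Then $(Q,\circ,*,/)$ satisfies the three identities (ST1') $(y\circ x)*((x*y)\circ y) = (y*(x*y))\circ(x*y)$, (ST3') $(x\circ y)*z = (x*z)\circ(y*z)$, and (ST5') $(x*((z*y)\circ y))/y = (x/(y\circ z))*z$, if and only if $(Q,\circ,*,/)$ is an oriented singquandle. -/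
theorem stu_axioms_iff_singquandle {Q : Type*} (mul div circ : Q → Q → Q)
    (hq : IsQuandle mul div) :
    ((∀ x y, mul (circ y x) (circ (mul x y) y) = circ (mul y (mul x y)) (mul x y)) ∧
     (∀ x y z, mul (circ x y) z = circ (mul x z) (mul y z)) ∧
     (∀ x y z, div (mul x (circ (mul z y) y)) y = mul (div x (circ y z)) z)) ↔
    IsOrientedSingquandle circ mul div := by
  obtain ⟨⟨hdm, hmd⟩, hidem, hdist⟩ := hq
  constructor
  · rintro ⟨h1, h3, h5⟩
    refine ⟨⟨⟨hdm, hmd⟩, hidem, hdist⟩, h3, ?_⟩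
    intro x y z
    have h := h5 (mul z (circ x y)) x y
    rw [hdm] at h
    rw [← h, hmd]
  · rintro ⟨_, h3, h2⟩
    refine ⟨?_, h3, ?_⟩
    · intro x y
      have e := h2 y x (circ y x)
      rw [hidem] at e
      rw [← e, h3 y x, hidem x, h3, hdist, hidem]
    · intro x y z
      have e := h2 y z (div x (circ y z))
      rw [hmd] at e
      rw [← e, hdm]
end

section
/- A binary algebraic structure $(Q,\cdot,\circ,*,/)$ is a stuquandle if and only if both $(Q,\cdot,*,/)$ and $(Q,\circ,*,/)$ are oriented singquandles. -/
def IsStuquandle {Q : Type*} (cdot circ mul div : Q → Q → Q) : Prop :=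
  IsOrientedSingquandle cdot mul div ∧
  (∀ x y, mul (circ y x) (circ (mul x y) y) = circ (mul y (mul x y)) (mul x y)) ∧
  (∀ x y z, mul (circ x y) z = circ (mul x z) (mul y z)) ∧
  (∀ x y z, div (mul x (circ (mul z y) y)) y = mul (div x (circ y z)) z)

theorem stuquandle_iff {Q : Type*} (cdot circ mul div : Q → Q → Q) :
    IsStuquandle cdot circ mul div ↔
      (IsOrientedSingquandle cdot mul div ∧ IsOrientedSingquandle circ mul div) := by
  constructor
  · rintro ⟨hsq, hst1, hst3, hst5⟩
    obtain ⟨hq, _, _⟩ := id hsq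
    obtain ⟨⟨hrq1, hrq2⟩, hid, hdist⟩ := hq
    refine ⟨hsq, ⟨⟨hrq1, hrq2⟩, hid, hdist⟩, hst3, ?_⟩
    -- C2 for circ from ST5'
    intro x y z
    have h := hst5 (mul z (circ x y)) x y
    rw [hrq1] at h
    have h2 := congrArg (fun t => mul t x) h
    rw [hrq2] at h2
    exact h2.symm
  · rintro ⟨hsq, hsq'⟩
    obtain ⟨⟨⟨hrq1, hrq2⟩, hid, hdist⟩, hdist', hC2⟩ := hsq'
    refine ⟨hsq, ?_, hdist', ?_⟩
    · -- ST1'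
      intro x y
      have e1 : mul (circ y x) (circ (mul x y) y)
          = mul (mul (circ y x) x) y := by
        have h := hC2 y x (circ y x)
        rw [hid (circ y x)] at h
        exact h.symm
      rw [e1, hdist' y x x, hid x, hdist' (mul y x) x y, hdist]
      rw [hid y]
    · -- ST5' from C2
      intro x y z
      have h := hC2 y z (div x (circ y z))
      rw [hrq2] at h
      have h2 := congrArg (fun t => div t y) h
      rw [hrq1] at h2
      exact h2.symm
end

section
/- Let $(Q,\circ,\bullet,*,/)$ be a binary algebraic structure. Then $(Q,\circ,\bullet,*,/)$ is an oriented bondle if and only if both $(Q,\circ,*,/)$ and $(Q,\bullet,*,/)$ are oriented singquandles and the identity $(y*x)\bullet x = (y*(x\bullet y))\bullet x$ holds for all $x,y \in Q$. -/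
def IsOrientedBondle {Q : Type*} (circ bull mul div : Q → Q → Q) : Prop :=
  IsOrientedSingquandle circ mul div ∧
  (∀ x y z, mul (bull x y) z = bull (mul x z) (mul y z)) ∧
  (∀ x y z, mul (div z (bull y x)) x = mul (div z y) (bull x y)) ∧
  (∀ x y, div (bull y x) y = bull y (div x (bull x y)))

section Aux

variable {Q : Type*} (bull mul div : Q → Q → Q)
variable (hdm : ∀ x y, div (mul x y) y = x) (hmd : ∀ x y, mul (div x y) y = x)
variable (hid : ∀ x, mul x x = x)
variable (hsd : ∀ x y z, mul (mul x y) z = mul (mul x z) (mul y z))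

include hdm hid in
lemma aux_dd : ∀ x, div x x = x := by
  intro x
  have h := hdm x x
  rwa [hid] at h

include hdm in
lemma aux_cancel : ∀ c a b, mul a c = mul b c → a = b := by
  intro c a b h
  rw [← hdm a c, h, hdm]

include hmd in
lemma aux_cancel_div : ∀ c a b, div a c = div b c → a = b := by
  intro c a b h
  rw [← hmd a c, h, hmd]

include hdm hmd hid hsd in
lemma aux_os2
    (hOB3 : ∀ x y z, mul (div z (bull y x)) x = mul (div z y) (bull x y))
    (hOB1 : ∀ x y z, mul (bull x y) z = bull (mul x z) (mul y z)) :
    ∀ x y z, mul (mul z y) x = mul (mul z (bull x y)) (bull (mul y x) x) := by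
  intro x y z
  -- bull (mul y x) x = mul (bull y x) x
  have h1 : bull (mul y x) x = mul (bull y x) x := by
    rw [hOB1 y x x, hid]
  rw [h1]
  -- write mul z (bull x y) = mul w x with w = div (mul z (bull x y)) x
  have h2 : mul z (bull x y) = mul (div (mul z (bull x y)) x) x := (hmd _ _).symm
  rw [h2, ← hsd]
  -- now goal: mul (mul z y) x = mul (mul (div (mul z (bull x y)) x) (bull y x)) x
  congr 1
  -- mul z y = mul (div (mul z (bull x y)) x) (bull y x)
  have h3 := hOB3 y x (mul z (bull x y))
  rw [hdm] at h3
  rw [← h3]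

include hdm hmd hid hsd in
lemma aux_ob3
    (hOB1 : ∀ x y z, mul (bull x y) z = bull (mul x z) (mul y z))
    (hOS2 : ∀ x y z, mul (mul z y) x = mul (mul z (bull x y)) (bull (mul y x) x)) :
    ∀ x y z, mul (div z (bull y x)) x = mul (div z y) (bull x y) := by
  -- first the key consequence Z1 : mul z y = mul (div (mul z (bull x y)) x) (bull y x)
  have hZ1 : ∀ x y z, mul z y = mul (div (mul z (bull x y)) x) (bull y x) := by
    intro x y z
    apply aux_cancel mul div hdm x
    have h := hOS2 x y z
    have h1 : bull (mul y x) x = mul (bull y x) x := by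
      rw [hOB1 y x x, hid]
    rw [h1] at h
    have h2 : mul z (bull x y) = mul (div (mul z (bull x y)) x) x := (hmd _ _).symm
    rw [h2, ← hsd] at h
    exact h
  intro x y z
  have h := hZ1 y x (div z (bull y x))
  rw [hmd] at h
  exact h

include hdm hmd hid in
lemma aux_L
    (hOB1 : ∀ x y z, mul (bull x y) z = bull (mul x z) (mul y z)) :
    ∀ y w, bull y (div w y) = div (bull y w) y := by
  intro y w
  have h : mul (bull y (div w y)) y = bull y w := by
    rw [hOB1, hid, hmd]
  rw [← h, hdm]

include hdm hmd hid hsd in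
lemma aux_E1_iff
    (hOB1 : ∀ x y z, mul (bull x y) z = bull (mul x z) (mul y z))
    (hOB3 : ∀ x y z, mul (div z (bull y x)) x = mul (div z y) (bull x y))
    (x y : Q) :
    (bull (mul y x) x = bull (mul y (bull x y)) x) ↔
      (bull y x = bull (div y (bull y x)) x) := by
  have hdd := aux_dd mul div hdm hid
  -- V : mul (div y (bull y x)) x = mul y (bull x y)
  have hV : mul (div y (bull y x)) x = mul y (bull x y) := by
    have h := hOB3 x y y
    rwa [hdd] at h
  have hL : bull (mul y x) x = mul (bull y x) x := by
    rw [hOB1 y x x, hid]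
  have hR : bull (mul y (bull x y)) x = mul (bull (div y (bull y x)) x) x := by
    rw [← hV, hOB1, hid]
  rw [hL, hR]
  constructor
  · intro h
    exact aux_cancel mul div hdm x _ _ h
  · intro h
    exact congrArg (fun t => mul t x) h

include hdm hmd hid hsd in
lemma aux_E2
    (hOB1 : ∀ x y z, mul (bull x y) z = bull (mul x z) (mul y z))
    (hOB3 : ∀ x y z, mul (div z (bull y x)) x = mul (div z y) (bull x y))
    (x y : Q) :
    mul (bull (div y (bull y x)) x) (bull y x) = bull y (mul x (bull y x)) := by
  rw [hOB1, hmd]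

include hdm hmd hid hsd in
lemma aux_K
    (hOB3 : ∀ x y z, mul (div z (bull y x)) x = mul (div z y) (bull x y)) :
    ∀ x y, div x (bull x y) = div (mul x (bull y x)) y := by
  have hdd := aux_dd mul div hdm hid
  intro x y
  -- hOB3 with (x := y, y := x, z := x): mul (div x (bull x y)) y = mul (div x x) (bull y x)
  have h := hOB3 y x x
  rw [hdd] at h
  -- h : mul (div x (bull x y)) y = mul x (bull y x)
  rw [← h, hdm]

include hdm hmd hid hsd in
lemma aux_extra
    (hOB1 : ∀ x y z, mul (bull x y) z = bull (mul x z) (mul y z))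
    (hOB3 : ∀ x y z, mul (div z (bull y x)) x = mul (div z y) (bull x y))
    (hOB4 : ∀ x y, div (bull y x) y = bull y (div x (bull x y))) :
    ∀ x y, bull (mul y x) x = bull (mul y (bull x y)) x := by
  intro x y
  rw [aux_E1_iff bull mul div hdm hmd hid hsd hOB1 hOB3 x y]
  -- goal : bull y x = bull (div y (bull y x)) x
  -- E2 : from OB4 we get bull y (mul x (bull y x)) = bull y x
  have hE2 : bull y (mul x (bull y x)) = bull y x := by
    have hK := aux_K bull mul div hdm hmd hid hsd hOB3 x y
    have h4 := hOB4 x y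
    rw [hK] at h4
    rw [aux_L bull mul div hdm hmd hid hOB1] at h4
    -- h4 : div (bull y x) y = div (bull y (mul x (bull y x))) y
    exact (aux_cancel_div mul div hmd y _ _ h4).symm
  apply aux_cancel mul div hdm (bull y x)
  rw [aux_E2 bull mul div hdm hmd hid hsd hOB1 hOB3 x y, hE2, hid]

include hdm hmd hid hsd in
lemma aux_ob4
    (hOB1 : ∀ x y z, mul (bull x y) z = bull (mul x z) (mul y z))
    (hOB3 : ∀ x y z, mul (div z (bull y x)) x = mul (div z y) (bull x y))
    (hextra : ∀ x y, bull (mul y x) x = bull (mul y (bull x y)) x) :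
    ∀ x y, div (bull y x) y = bull y (div x (bull x y)) := by
  intro x y
  have hE1 : bull y x = bull (div y (bull y x)) x :=
    (aux_E1_iff bull mul div hdm hmd hid hsd hOB1 hOB3 x y).mp (hextra x y)
  have hE2 : bull y (mul x (bull y x)) = bull y x := by
    rw [← aux_E2 bull mul div hdm hmd hid hsd hOB1 hOB3 x y, ← hE1, hid]
  rw [aux_K bull mul div hdm hmd hid hsd hOB3 x y,
      aux_L bull mul div hdm hmd hid hOB1, hE2]

end Aux

theorem bondle_iff {Q : Type*} (circ bull mul div : Q → Q → Q) :
    IsOrientedBondle circ bull mul div ↔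
      (IsOrientedSingquandle circ mul div ∧ IsOrientedSingquandle bull mul div ∧
       ∀ x y, bull (mul y x) x = bull (mul y (bull x y)) x) := by
  constructor
  · rintro ⟨hsc, hOB1, hOB3, hOB4⟩
    obtain ⟨⟨⟨hdm, hmd⟩, hid, hsd⟩, _, _⟩ := id hsc
    refine ⟨hsc, ⟨⟨⟨hdm, hmd⟩, hid, hsd⟩, hOB1, ?_⟩, ?_⟩
    · exact aux_os2 bull mul div hdm hmd hid hsd hOB3 hOB1
    · exact aux_extra bull mul div hdm hmd hid hsd hOB1 hOB3 hOB4
  · rintro ⟨hsc, ⟨hq, hOB1, hOS2⟩, hextra⟩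
    obtain ⟨⟨hdm, hmd⟩, hid, hsd⟩ := hq
    have hOB3 := aux_ob3 bull mul div hdm hmd hid hsd hOB1 hOS2
    exact ⟨hsc, hOB1, hOB3,
      aux_ob4 bull mul div hdm hmd hid hsd hOB1 hOB3 hextra⟩
end

section
/- Let $(Q,*,/)$ be a quandle and $\bullet$ a binary operation on $Q$ such that $(x\bullet y)*z = (x*z)\bullet(y*z)$ holds. Then the identity $(z/(y\bullet x))*x = (z/y)*(x\bullet y)$ holds for all $x,y,z$ if and only if $(z*y)*x = (z*(x\bullet y))*((y*x)\bullet x)$ holds for all $x,y,z$. -/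
theorem OB3_iff_OS {Q : Type*} (mul div bull : Q → Q → Q) (hq : IsQuandle mul div)
    (h1 : ∀ x y z, mul (bull x y) z = bull (mul x z) (mul y z)) :
    (∀ x y z, mul (div z (bull y x)) x = mul (div z y) (bull x y)) ↔
    (∀ x y z, mul (mul z y) x = mul (mul z (bull x y)) (bull (mul y x) x)) := by
  obtain ⟨⟨hdm, hmd⟩, hid, hdist⟩ := hq
  have hbx : ∀ x y, mul (bull y x) x = bull (mul y x) x := by
    intro x y; rw [h1, hid]
  have hinj : ∀ a b c, mul a c = mul b c → a = b := by
    intro a b c h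
    have := hdm a c
    rw [h, hdm] at this
    exact this.symm
  constructor
  · intro hA x y z
    have key : mul (div (mul z y) (bull y x)) x = mul z (bull x y) := by
      have := hA x y (mul z y); rwa [hdm] at this
    calc mul (mul z y) x
        = mul (mul (div (mul z y) (bull y x)) (bull y x)) x := by rw [hmd]
      _ = mul (mul (div (mul z y) (bull y x)) x) (mul (bull y x) x) := hdist _ _ _
      _ = mul (mul z (bull x y)) (bull (mul y x) x) := by rw [key, hbx]
  · intro hB x y z
    apply hinj _ _ (bull (mul y x) x)
    calc mul (mul (div z (bull y x)) x) (bull (mul y x) x)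
        = mul (mul (div z (bull y x)) x) (mul (bull y x) x) := by rw [hbx]
      _ = mul (mul (div z (bull y x)) (bull y x)) x := (hdist _ _ _).symm
      _ = mul z x := by rw [hmd]
      _ = mul (mul (div z y) y) x := by rw [hmd]
      _ = mul (mul (div z y) (bull x y)) (bull (mul y x) x) := hB x y (div z y)
end

section
/- Let $(Q,*,/)$ be a quandle. Then $(Q,*,*,*,/)$ is an oriented bondle if and only if both $\rho_y^2 = \rho_{y*x}\rho_{y/x}$ and $y*x = (y*x)*y$ hold for all $x,y \in Q$ (where $\rho_x$ denotes right multiplication by $x$ with respect to $*$). -/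
theorem bondle_self_iff {Q : Type*} (mul div : Q → Q → Q) (hq : IsQuandle mul div) :
    IsOrientedBondle mul mul mul div ↔
      ((∀ x y z : Q, mul (mul z y) y = mul (mul z (div y x)) (mul y x)) ∧
       (∀ x y : Q, mul y x = mul (mul y x) y)) := by
  obtain ⟨⟨q1, q2⟩, q3, q4⟩ := hq
  have q6 : ∀ a, div a a = a := by
    intro a
    nth_rewrite 1 [← q3 a]
    exact q1 a a
  have q5 : ∀ a b c, mul (div a b) c = div (mul a c) (mul b c) := by
    intro a b c
    have h := q4 (div a b) b c
    rw [q2] at h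
    rw [h, q1]
  have q7 : ∀ a b c, mul a (mul b c) = mul (mul (div a c) b) c := by
    intro a b c; rw [q4, q2]
  have q8 : ∀ a b c, div a (mul b c) = mul (div (div a c) b) c := by
    intro a b c; rw [q5, q2]
  have q9 : ∀ a b c, mul a (div b c) = div (mul (mul a c) b) c := by
    intro a b c
    have h : mul (mul a (div b c)) c = mul (mul a c) b := by rw [q4, q2]
    rw [← h, q1]
  have cancel : ∀ a b c, mul a c = mul b c → a = b := by
    intro a b c h
    rw [← q1 a c, h, q1]
  have canceld : ∀ a b c, div a c = div b c → a = b := by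
    intro a b c h
    rw [← q2 a c, h, q2]
  have hfix : ∀ u b, mul u b = u → div u b = u := by
    intro u b h
    calc div u b = div (mul u b) b := by rw [h]
      _ = u := q1 u b
  constructor
  · intro hb
    have hD := hb.2.2.1
    have hE := hb.2.2.2
    have Dstar : ∀ x y z, mul (mul (div (div z x) y) x) x
        = mul (mul (div (div z y) y) x) y := by
      intro x y z
      have h := hD x y z
      rw [q8, q7] at h
      exact h
    have M : ∀ x y z, mul (div (div (mul z x) y) y) x
        = div (mul (mul (div z y) x) x) y := by
      intro x y z
      have h := Dstar x y (mul z x)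
      rw [q1] at h
      rw [h, q1]
    have M2 : ∀ x y z, div (mul (mul (div z x) y) y) x
        = mul (div (div (mul z y) x) x) y := by
      intro x y z
      have h := M x y (mul (div (div (mul z y) x) x) y)
      rw [q1, q2, q2, q1] at h
      have h1 := congrArg (fun t => div t x) h
      simp only [q1] at h1
      have h2 := congrArg (fun t => mul t y) h1
      simp only [q2] at h2
      have h3 := congrArg (fun t => mul t y) h2
      simp only [q2] at h3
      have h4 := congrArg (fun t => div t x) h3
      simp only [q1] at h4
      exact h4.symm
    have P : ∀ x y z : Q, mul (mul z y) y = mul (mul z (div y x)) (mul y x) := by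
      intro x y z
      rw [q9, q7]
      have h := M2 x y (mul z x)
      rw [q1] at h
      rw [← h, q2]
    refine ⟨P, ?_⟩
    intro x y
    have hE' := hE x y
    rw [q8, q7, q6, q9, q9] at hE'
    have h1 : div (div (mul y x) y) y
        = div (div (mul (mul (mul y x) y) x) y) x := by
      rw [hE', q1]
    have h2 : mul (div (div (mul y x) y) y) x
        = div (mul (mul (mul y x) y) x) y := by
      rw [h1, q2]
    have h3 := M x y y
    rw [q6] at h3
    have h4 : mul (mul (mul y x) y) x = mul (mul y x) x :=
      canceld _ _ y (h2.symm.trans h3)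
    have h5 : mul (mul y x) y = mul y x := cancel _ _ x h4
    exact h5.symm
  · rintro ⟨P, Qh⟩
    have Pstar : ∀ x y z, mul (mul z y) y
        = mul (mul (div (div (mul (mul z x) y) x) x) y) x := by
      intro x y z
      have h := P x y z
      rw [q9, q7] at h
      exact h
    have M2 : ∀ x y z, div (mul (mul (div z x) y) y) x
        = mul (div (div (mul z y) x) x) y := by
      intro x y z
      have h := Pstar x y (div z x)
      rw [q2] at h
      rw [h, q1]
    have M : ∀ x y z, mul (div (div (mul z x) y) y) x
        = div (mul (mul (div z y) x) x) y := by
      intro x y z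
      have h := M2 x y (div (mul (mul (div z y) x) x) y)
      rw [q2, q1, q1, q2] at h
      have h1 := congrArg (fun t => mul t x) h
      simp only [q2] at h1
      have h2 := congrArg (fun t => div t y) h1
      simp only [q1] at h2
      have h3 := congrArg (fun t => div t y) h2
      simp only [q1] at h3
      have h4 := congrArg (fun t => mul t x) h3
      simp only [q2] at h4
      exact h4.symm
    have hB : ∀ x y z, mul (mul z y) x
        = mul (mul z (mul x y)) (mul (mul y x) x) := by
      intro x y z
      rw [q7, q7, q7]
      have h := Pstar x y (div z y)
      rw [q2] at h
      rw [← h]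
    have hD : ∀ x y z, mul (div z (mul y x)) x = mul (div z y) (mul x y) := by
      intro x y z
      rw [q8, q7]
      have h := M x y (div z x)
      rw [q2] at h
      rw [h, q2]
    have claimA : ∀ x y, mul y (mul x y) = mul (mul y x) y := by
      intro x y
      rw [q7, q6]
    have L : ∀ x y, mul (mul (mul y x) x) y = mul (mul y x) x := by
      intro x y
      calc mul (mul (mul y x) x) y
          = mul (mul (mul y x) y) (mul x y) := q4 (mul y x) x y
        _ = mul (mul y x) (mul x y) := by rw [← Qh x y]
        _ = mul (mul y x) (mul (mul x y) x) := by rw [← Qh y x]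
        _ = mul (mul (div (mul y x) x) (mul x y)) x := q7 (mul y x) (mul x y) x
        _ = mul (mul y (mul x y)) x := by rw [q1]
        _ = mul (mul (mul y x) y) x := by rw [claimA]
        _ = mul (mul y x) x := by rw [← Qh x y]
    have hE : ∀ x y, div (mul y x) y = mul y (div x (mul x y)) := by
      intro x y
      rw [q8, q7, q6, q9, q9, ← Qh x y, hfix (mul (mul y x) x) y (L x y), q1,
        hfix (mul y x) y (Qh x y).symm]
      exact Qh x y
    exact ⟨⟨⟨⟨q1, q2⟩, q3, q4⟩, q4, hB⟩, q4, hD, hE⟩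
end

section
/- Let $(Q,*,/)$ be an involutory quandle (so $* = /$). Then $(Q,*,*,*,*)$ is an oriented bondle if and only if $y = y*(y*x)$ holds for all $x,y \in Q$. -/
theorem involutory_bondle_iff {Q : Type*} (mul div : Q → Q → Q)
    (hq : IsQuandle mul div) (hinv : ∀ x y : Q, mul (mul x y) y = x)
    (hmd : div = mul) :
    IsOrientedBondle mul mul mul mul ↔ (∀ x y : Q, y = mul y (mul y x)) := by
  obtain ⟨-, hid, hdist⟩ := hq

  constructor
  · rintro ⟨-, -, -, hB⟩
    intro x y
    -- hB : ∀ x y, mul (mul y x) y = mul y (mul x (mul x y))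
    have E : mul y x = mul y (mul (mul x y) x) := by
      have h : mul (mul (mul y x) y) y = mul (mul y (mul x (mul x y))) y :=
        congrArg (fun t => mul t y) (hB x y)
      rw [hinv, hdist y (mul x (mul x y)) y, hid, hdist x (mul x y) y, hinv x y] at h
      exact h
    calc y = mul (mul y (mul (mul x y) x)) (mul (mul x y) x) := (hinv _ _).symm
      _ = mul (mul y x) (mul (mul x y) x) := by rw [← E]
      _ = mul (mul y (mul x y)) x := (hdist y (mul x y) x).symm
      _ = mul (mul (mul y x) y) x := by rw [hdist y x y, hid]
      _ = mul (mul (mul y x) x) (mul y x) := hdist (mul y x) y x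
      _ = mul y (mul y x) := by rw [hinv]
  · intro hT
    have T' : ∀ a b, mul (mul a b) a = mul a b := by
      intro a b
      have h : mul a b = mul (mul a (mul a b)) b := congrArg (fun t => mul t b) (hT b a)
      rw [hdist a (mul a b) b, hinv a b] at h
      exact h.symm
    refine ⟨⟨⟨⟨hinv, hinv⟩, hid, hdist⟩, hdist, ?_⟩, hdist, ?_, ?_⟩
    · intro x y z
      rw [hinv y x, hdist z (mul x y) y, hinv x y]
    · intro x y z
      rw [hdist z (mul y x) x, hinv y x, hdist z x y]
    · intro x y
      rw [← hT y x]
      exact T' y x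
end

section
/- Let $(Q,*,/)$ be a 2-reductive quandle (satisfying $x*(y*z) = x*(y*u)$ for all $x,y,z,u$). Then for all integers $n,m$, the structure $(Q,*^n,*^m,/^m)$ is an oriented singquandle, where $x*^k y = \rho_y^k(x)$ and $x/^k y = \rho_y^{-k}(x)$ with $\rho_y(x) = x*y$. -/
/-!
In a 2-reductive quandle the right multiplication `ρ y` depends only on the orbit of `y`
under the right multiplication group, and all `ρ y` commute. Hence every power `ρ y ^ k`
again fixes `y`, commutes with every other, and does not move the `ρ`-class of any point.
With these three facts each axiom of an oriented singquandle for `(ρ ^ n, ρ ^ m, ρ ^ (-m))`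
reduces to commuting two powers of right multiplications.
-/

section TwoReductive

variable {Q : Type*} {mul div : Q → Q → Q}

theorem IsQuandle.mul_mul_right (hq : IsQuandle mul div)
    (h2r : ∀ x y z u : Q, mul x (mul y z) = mul x (mul y u)) (x y z : Q) :
    mul x (mul y z) = mul x y := by
  rw [h2r x y z y, hq.2.1]

theorem IsQuandle.mul_right_comm (hq : IsQuandle mul div)
    (h2r : ∀ x y z u : Q, mul x (mul y z) = mul x (mul y u)) (x y z : Q) :
    mul (mul x y) z = mul (mul x z) y := by
  rw [hq.2.2, hq.mul_mul_right h2r]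

end TwoReductive

section PermFamily

variable {Q : Type*} (ρ : Q → Equiv.Perm Q)

theorem isRightQuasigroup_zpow (m : ℤ) :
    IsRightQuasigroup (fun x y => (ρ y ^ m) x) (fun x y => (ρ y ^ (-m)) x) := by
  constructor <;> intro x y <;>
    simp only [← Equiv.Perm.mul_apply, ← zpow_add, neg_add_cancel, add_neg_cancel, zpow_zero,
      Equiv.Perm.one_apply]

variable {ρ}

theorem apply_zpow_apply_eq_of_apply_apply_eq (hinv : ∀ y z, ρ (ρ z y) = ρ y) (k : ℤ) (z y : Q) :
    ρ ((ρ z ^ k) y) = ρ y := by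
  induction k using Int.induction_on generalizing y with
  | zero => rfl
  | succ i ih => rw [zpow_add_one, Equiv.Perm.mul_apply, ih, hinv]
  | pred i ih =>
    rw [zpow_sub_one, Equiv.Perm.mul_apply, ih]
    simpa using (hinv ((ρ z)⁻¹ y) z).symm

theorem zpow_apply_zpow_apply_comm (hcomm : ∀ y z, Commute (ρ y) (ρ z)) (k l : ℤ) (y z x : Q) :
    (ρ y ^ k) ((ρ z ^ l) x) = (ρ z ^ l) ((ρ y ^ k) x) := by
  rw [← Equiv.Perm.mul_apply, ((hcomm y z).zpow_zpow k l).eq, Equiv.Perm.mul_apply]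

theorem isOrientedSingquandle_zpow (hfix : ∀ y, ρ y y = y) (hinv : ∀ y z, ρ (ρ z y) = ρ y)
    (hcomm : ∀ y z, Commute (ρ y) (ρ z)) (n m : ℤ) :
    IsOrientedSingquandle (fun x y => (ρ y ^ n) x)
      (fun x y => (ρ y ^ m) x) (fun x y => (ρ y ^ (-m)) x) := by
  have hρ := apply_zpow_apply_eq_of_apply_apply_eq hinv
  have hcomm' := zpow_apply_zpow_apply_comm hcomm
  refine ⟨⟨isRightQuasigroup_zpow ρ m, fun x => ?_, fun x y z => ?_⟩, fun x y z => ?_,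
    fun x y z => ?_⟩ <;> dsimp only
  · exact Equiv.Perm.zpow_apply_eq_self_of_apply_eq_self (hfix x) m
  · rw [hρ m z y, hcomm' m m z y x]
  · rw [hρ m z y, hcomm' m n z y x]
  · rw [hρ n y x, hρ n x, hρ m x y, hcomm' m m x y z]

end PermFamily

theorem two_reductive_singquandle {Q : Type*} (mul div : Q → Q → Q)
    (hq : IsQuandle mul div)
    (h2r : ∀ x y z u : Q, mul x (mul y z) = mul x (mul y u))
    (ρ : Q → Equiv.Perm Q) (hρ : ∀ y x, ρ y x = mul x y) (n m : ℤ) :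
    IsOrientedSingquandle (fun x y => ((ρ y) ^ n) x)
      (fun x y => ((ρ y) ^ m) x) (fun x y => ((ρ y) ^ (-m)) x) := by
  refine isOrientedSingquandle_zpow (fun y => ?_) (fun y z => ?_) (fun y z => ?_) n m
  · rw [hρ, hq.2.1]
  · ext x
    rw [hρ, hρ, hρ, hq.mul_mul_right h2r]
  · ext x
    simp only [Equiv.Perm.mul_apply, hρ, hq.mul_right_comm h2r]
end

section
/- Let $(Q,*,/)$ be a 2-reductive quandle. Then for all integers $n,m$, the structure $(Q,*^n,*^m,*,/)$ is an oriented bondle, where $x*^k y = \rho_y^k(x)$ with $\rho_y(x) = x*y$. -/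
open Equiv

theorem Equiv.Perm.apply_zpow_apply_eq {α β : Type*} {f : α → β} {σ : Perm α}
    (h : ∀ x, f (σ x) = f x) (k : ℤ) (x : α) : f ((σ ^ k) x) = f x := by
  induction k using Int.induction_on generalizing x with
  | zero => rfl
  | succ i ih => rw [zpow_add_one, Perm.mul_apply, ih, h]
  | pred i ih =>
    rw [zpow_sub_one, Perm.mul_apply, ih]
    exact (h _).symm.trans (congrArg f (σ.apply_symm_apply x))

section RightTranslations

variable {Q : Type*} {mul div : Q → Q → Q} {ρ : Q → Perm Q}

theorem mul_mul_eq_of_twoReductive (hid : ∀ x, mul x x = x)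
    (h2r : ∀ x y z u : Q, mul x (mul y z) = mul x (mul y u)) (x y z : Q) :
    mul x (mul y z) = mul x y := by
  rw [h2r x y z y, hid]

variable (hρ : ∀ y x, ρ y x = mul x y)
include hρ

theorem rho_inv_apply (hq : IsRightQuasigroup mul div) (y z : Q) : (ρ y)⁻¹ z = div z y :=
  Perm.inv_eq_iff_eq.2 (by rw [hρ, hq.2])

theorem rho_mul (h : ∀ x y z, mul x (mul y z) = mul x y) (x y : Q) : ρ (mul x y) = ρ x := by
  ext z
  rw [hρ, hρ, h]

section

variable (hmul : ∀ x y, ρ (mul x y) = ρ x)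
include hmul

theorem rho_rho_apply (y x : Q) : ρ (ρ y x) = ρ x := by
  rw [hρ, hmul]

theorem rho_zpow_apply (k : ℤ) (y x : Q) : ρ ((ρ y ^ k) x) = ρ x :=
  Perm.apply_zpow_apply_eq (rho_rho_apply hρ hmul y) k x

theorem rho_inv_apply_apply (y x : Q) : ρ ((ρ y)⁻¹ x) = ρ x := by
  simpa using rho_zpow_apply hρ hmul (-1) y x

variable (hsd : ∀ x y z, mul (mul x y) z = mul (mul x z) (mul y z))
include hsd

theorem commute_rho (a b : Q) : Commute (ρ a) (ρ b) := by
  ext x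
  rw [Perm.mul_apply, Perm.mul_apply, hρ, hρ, hρ, hρ, hsd, ← hρ (mul b a), hmul, hρ]

theorem mul_zpow_apply (k : ℤ) (x y z : Q) :
    mul ((ρ y ^ k) x) z = (ρ (mul y z) ^ k) (mul x z) := by
  rw [hmul, ← hρ, ← hρ, ← Perm.mul_apply, ← Perm.mul_apply,
    ((commute_rho hρ hmul hsd y z).zpow_left k).eq]

end

end RightTranslations

theorem two_reductive_bondle {Q : Type*} (mul div : Q → Q → Q)
    (hq : IsQuandle mul div)
    (h2r : ∀ x y z u : Q, mul x (mul y z) = mul x (mul y u))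
    (ρ : Q → Equiv.Perm Q) (hρ : ∀ y x, ρ y x = mul x y) (n m : ℤ) :
    IsOrientedBondle (fun x y => ((ρ y) ^ n) x) (fun x y => ((ρ y) ^ m) x) mul div := by
  obtain ⟨hrq, hid, hsd⟩ := hq
  have hmul := rho_mul hρ (mul_mul_eq_of_twoReductive hid h2r)
  have hcomm := commute_rho hρ hmul hsd
  have hdiv (z y : Q) : div z y = (ρ y)⁻¹ z := (rho_inv_apply hρ hrq y z).symm
  refine ⟨⟨⟨hrq, hid, hsd⟩, mul_zpow_apply hρ hmul hsd n, ?_⟩,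
    mul_zpow_apply hρ hmul hsd m, ?_, ?_⟩
  · intro x y z
    simp only [← hρ, rho_zpow_apply hρ hmul, rho_rho_apply hρ hmul]
    exact congrArg (· z) (hcomm x y).eq
  · intro x y z
    simp only [← hρ, hdiv, rho_zpow_apply hρ hmul]
  · intro x y
    have hfix : (ρ y)⁻¹ y = y := Perm.inv_eq_iff_eq.2 (by rw [hρ, hid])
    simp only [hdiv, rho_zpow_apply hρ hmul, rho_inv_apply_apply hρ hmul]
    rw [← Perm.mul_apply, ((hcomm y x).zpow_right m).inv_left.eq, Perm.mul_apply, hfix]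
end
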